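/- Let G be a group acting by ring automorphisms on a (possibly noncommutative) ring R, and let N be a normal subgroup of G of finite index. If I and I' are N-prime two-sided ideals of R with I:G = I':G (that is, ⋂_{g∈G} g·I = ⋂_{g∈G} g·I'), then I' = g·I for some g ∈ G. In other words, the fibres of the map I ↦ I:G from N-prime ideals to G-prime ideals are exactly the orbits of G acting on the set of N-prime ideals. -/

import Mathlib

section Defs

variable {G R : Type*} [Group G] [Ring R] [MulSemiringAction G R]

/-- The image `g·I` of a two-sided ideal `I` under the ring automorphism `x ↦ g • x`;
as a set it is `{g • x : x ∈ I}`, realised as the preimage under `x ↦ g⁻¹ • x`. -/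
def idealSMul (g : G) (I : TwoSidedIdeal R) : TwoSidedIdeal R :=
  TwoSidedIdeal.comap (MulSemiringAction.toRingHom G R g⁻¹) I

/-- A two-sided ideal is `H`-stable if `h·I = I` for all `h ∈ H`. -/
def IsStableUnder (H : Subgroup G) (I : TwoSidedIdeal R) : Prop :=
  ∀ h ∈ H, idealSMul h I = I

/-- A two-sided ideal `I` is `H`-prime if it is `H`-stable, proper, and for all
`H`-stable two-sided ideals `A`, `B`, `A·B ⊆ I` implies `A ⊆ I` or `B ⊆ I`. -/
def IsHPrime (H : Subgroup G) (I : TwoSidedIdeal R) : Prop :=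
  IsStableUnder H I ∧ I ≠ ⊤ ∧
    ∀ A B : TwoSidedIdeal R, IsStableUnder H A → IsStableUnder H B →
      (∀ a ∈ A, ∀ b ∈ B, a * b ∈ I) → A ≤ I ∨ B ≤ I

end Defs

section Aux

variable {G R : Type*} [Group G] [Ring R] [MulSemiringAction G R]

lemma mem_idealSMul {g : G} {I : TwoSidedIdeal R} {x : R} :
    x ∈ idealSMul g I ↔ g⁻¹ • x ∈ I := by
  unfold idealSMul
  rw [TwoSidedIdeal.mem_comap]
  exact Iff.rfl

lemma idealSMul_one (I : TwoSidedIdeal R) : idealSMul (1 : G) I = I := by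
  ext x; simp [mem_idealSMul]

lemma idealSMul_mul (g h : G) (I : TwoSidedIdeal R) :
    idealSMul (g * h) I = idealSMul g (idealSMul h I) := by
  ext x; simp [mem_idealSMul, mul_smul]

lemma idealSMul_mono (g : G) {I J : TwoSidedIdeal R} (hIJ : I ≤ J) :
    idealSMul g I ≤ idealSMul g J := by
  intro x hx
  rw [mem_idealSMul] at hx ⊢
  exact hIJ hx

lemma idealSMul_le_cancel (g : G) {I J : TwoSidedIdeal R}
    (hIJ : idealSMul g I ≤ idealSMul g J) : I ≤ J := by
  have := idealSMul_mono g⁻¹ hIJ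
  rwa [← idealSMul_mul, ← idealSMul_mul, inv_mul_cancel, idealSMul_one, idealSMul_one] at this

lemma idealSMul_iInf {ι : Sort*} (g : G) (A : ι → TwoSidedIdeal R) :
    idealSMul g (⨅ i, A i) = ⨅ i, idealSMul g (A i) := by
  refine le_antisymm (le_iInf fun i => idealSMul_mono g (iInf_le A i)) ?_
  have h1 : idealSMul g⁻¹ (⨅ i, idealSMul g (A i)) ≤ ⨅ i, A i :=
    le_iInf fun i => le_trans (idealSMul_mono g⁻¹ (iInf_le _ i))
      (by rw [← idealSMul_mul, inv_mul_cancel, idealSMul_one])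
  have h2 := idealSMul_mono g h1
  rwa [← idealSMul_mul, mul_inv_cancel, idealSMul_one] at h2

/-- Each translate of an `N`-stable ideal is `N`-stable when `N` is normal. -/
lemma stable_idealSMul (N : Subgroup G) [N.Normal] {I : TwoSidedIdeal R}
    (hI : IsStableUnder N I) (g : G) : IsStableUnder N (idealSMul g I) := by
  intro n hn
  rw [← idealSMul_mul]
  have h1 : n * g = g * (g⁻¹ * n * g) := by group
  rw [h1, idealSMul_mul, hI _ (Subgroup.Normal.conj_mem' ‹N.Normal› n hn g)]

/-- If a finite inf of `N`-stable ideals lies in an `N`-prime ideal, one factor does. -/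
lemma exists_le_of_finset_inf {N : Subgroup G} {P : TwoSidedIdeal R} (hP : IsHPrime N P)
    {ι : Type*} (A : ι → TwoSidedIdeal R) (hA : ∀ i, IsStableUnder N (A i)) :
    ∀ s : Finset ι, (⨅ i ∈ s, A i) ≤ P → ∃ i ∈ s, A i ≤ P := by
  classical
  intro s
  induction s using Finset.induction_on with
  | empty =>
    intro hle
    simp only [Finset.notMem_empty, iInf_of_empty, iInf_top] at hle
    exact absurd (top_le_iff.mp hle) hP.2.1
  | @insert a s ha ih =>
    intro hle
    rw [Finset.iInf_insert] at hle
    have hBst : IsStableUnder N (⨅ i ∈ s, A i) := by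
      intro n hn
      rw [idealSMul_iInf]
      refine iInf_congr fun i => ?_
      rw [idealSMul_iInf]
      exact iInf_congr fun hi => hA i n hn
    have hmul : ∀ x ∈ A a, ∀ y ∈ (⨅ i ∈ s, A i), x * y ∈ P := by
      intro x hx y hy
      apply hle
      rw [TwoSidedIdeal.mem_inf]
      exact ⟨TwoSidedIdeal.mul_mem_right _ _ _ hx, TwoSidedIdeal.mul_mem_left _ _ _ hy⟩
    rcases hP.2.2 (A a) (⨅ i ∈ s, A i) (hA a) hBst hmul with h1 | h2
    · exact ⟨a, Finset.mem_insert_self a s, h1⟩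
    · obtain ⟨i, hi, hle'⟩ := ih h2
      exact ⟨i, Finset.mem_insert_of_mem hi, hle'⟩

lemma idealSMul_pow_le (h : G) {I : TwoSidedIdeal R} (hle : idealSMul h I ≤ I) :
    ∀ k : ℕ, idealSMul (h ^ (k + 1)) I ≤ idealSMul h I := by
  intro k
  induction k with
  | zero => rw [pow_one]
  | succ k ih =>
    have h2 : h ^ (k + 2) = h * h ^ (k + 1) := by rw [← pow_succ']
    rw [h2, idealSMul_mul]
    exact idealSMul_mono h (le_trans ih hle)

end Aux

/-- For `N` a normal subgroup of finite index in `G`, two `N`-prime two-sided ideals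
`I`, `I'` of `R` with `I:G = I':G` lie in the same `G`-orbit: `I' = g·I` for some `g`. -/
theorem stmt6 {G R : Type*} [Group G] [Ring R] [MulSemiringAction G R]
    (N : Subgroup G) [N.Normal] [N.FiniteIndex]
    (I I' : TwoSidedIdeal R) (hI : IsHPrime N I) (hI' : IsHPrime N I')
    (h : (⨅ g : G, idealSMul g I) = ⨅ g : G, idealSMul g I') :
    ∃ g : G, idealSMul g I = I' := by
  classical
  haveI : Finite (G ⧸ N) := Subgroup.finite_quotient_of_finiteIndex
  haveI : Fintype (G ⧸ N) := Fintype.ofFinite _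
  have smul_coset : ∀ (J : TwoSidedIdeal R), IsStableUnder N J → ∀ g : G,
      idealSMul ((QuotientGroup.mk g : G ⧸ N)).out J = idealSMul g J := by
    intro J hJ g
    have hmem : g⁻¹ * ((QuotientGroup.mk g : G ⧸ N)).out ∈ N := by
      rw [← QuotientGroup.eq]
      exact (QuotientGroup.out_eq' _).symm
    have heq : ((QuotientGroup.mk g : G ⧸ N)).out
        = g * (g⁻¹ * ((QuotientGroup.mk g : G ⧸ N)).out) := by group
    rw [heq, idealSMul_mul, hJ _ hmem]
  have inf_eq : ∀ (J : TwoSidedIdeal R), IsStableUnder N J →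
      (⨅ q : G ⧸ N, idealSMul q.out J) = ⨅ g : G, idealSMul g J := by
    intro J hJ
    apply le_antisymm
    · apply le_iInf; intro g
      exact (iInf_le _ (QuotientGroup.mk g : G ⧸ N)).trans (le_of_eq (smul_coset J hJ g))
    · exact le_iInf fun q => iInf_le _ q.out
  have hIinf : (⨅ q ∈ (Finset.univ : Finset (G ⧸ N)), idealSMul (Quotient.out q) I) ≤ I' := by
    have e : (⨅ q ∈ (Finset.univ : Finset (G ⧸ N)), idealSMul (Quotient.out q) I)
        = ⨅ q : G ⧸ N, idealSMul q.out I := by simp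
    rw [e, inf_eq I hI.1, h]
    exact (iInf_le _ (1 : G)).trans (le_of_eq (idealSMul_one I'))
  obtain ⟨q, -, hq⟩ := exists_le_of_finset_inf hI' (fun q : G ⧸ N => idealSMul (Quotient.out q) I)
    (fun q => stable_idealSMul N hI.1 _) Finset.univ hIinf
  have hI'inf : (⨅ q ∈ (Finset.univ : Finset (G ⧸ N)), idealSMul (Quotient.out q) I') ≤ I := by
    have e : (⨅ q ∈ (Finset.univ : Finset (G ⧸ N)), idealSMul (Quotient.out q) I')
        = ⨅ q : G ⧸ N, idealSMul q.out I' := by simp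
    rw [e, inf_eq I' hI'.1, ← h]
    exact (iInf_le _ (1 : G)).trans (le_of_eq (idealSMul_one I))
  obtain ⟨q', -, hq'⟩ := exists_le_of_finset_inf hI (fun q : G ⧸ N => idealSMul (Quotient.out q) I')
    (fun q => stable_idealSMul N hI'.1 _) Finset.univ hI'inf
  set a := Quotient.out q with ha
  set b := Quotient.out q' with hb
  have hba : idealSMul (b * a) I ≤ I := by
    rw [idealSMul_mul]
    exact le_trans (idealSMul_mono b hq) hq'
  set c : G := b * a with hc
  have hfin : ∃ k : ℕ, 0 < k ∧ c ^ k ∈ N := by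
    have hfo : IsOfFinOrder (QuotientGroup.mk c : G ⧸ N) := isOfFinOrder_of_finite _
    obtain ⟨k, hk, hck⟩ := hfo.exists_pow_eq_one
    refine ⟨k, hk, ?_⟩
    have h1 : (QuotientGroup.mk (c ^ k) : G ⧸ N) = 1 := by
      rw [QuotientGroup.mk_pow]; exact hck
    rwa [← QuotientGroup.eq_one_iff]
  obtain ⟨k, hk, hck⟩ := hfin
  have heq : idealSMul c I = I := by
    refine le_antisymm hba ?_
    obtain ⟨m, rfl⟩ : ∃ m, k = m + 1 := ⟨k - 1, (Nat.succ_pred_eq_of_pos hk).symm⟩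
    calc I = idealSMul (c ^ (m + 1)) I := (hI.1 _ hck).symm
    _ ≤ idealSMul c I := idealSMul_pow_le c hba m
  refine ⟨a, le_antisymm hq ?_⟩
  have hfinal : idealSMul b I' ≤ idealSMul b (idealSMul a I) := by
    rw [← idealSMul_mul]
    exact le_trans hq' heq.symm.le
  exact idealSMul_le_cancel b hfinal
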